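/- arXiv:1009.0225 — 2 statements merged into one kernel-verified Lean document; each statement's English description precedes it below -/
import Mathlib

section
/- Let $\mu = 1/8$ and define $\tau(v,r) = (v - 2r)\,e^{2r/(v-2r)}$ on the open set where $v \neq 2r$. Then $\tau$ satisfies the linear first-order PDE $r\,\frac{\partial \tau}{\partial v} + (r - 2\mu v)\,\frac{\partial \tau}{\partial r} = 0$, i.e., $r\,\partial_v \tau + \left(r - \frac{v}{4}\right)\partial_r \tau = 0$. -/
/-! Along the vector field `X = r ∂_v + (r - v/4) ∂_r`, with `w = v - 2r`, one has `X w = w/2` and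
`X (2r/w) = -1/2`, so `X (w e^{2r/w}) = (w/2) e^{2r/w} - (w/2) e^{2r/w} = 0`. -/

theorem HasDerivAt.mul_exp_div {f g : ℝ → ℝ} {f' g' x : ℝ} (hf : HasDerivAt f f' x)
    (hg : HasDerivAt g g' x) (hgx : g x ≠ 0) :
    HasDerivAt (fun t => g t * Real.exp (f t / g t))
      (Real.exp (f x / g x) * (g' + f' - f x * g' / g x)) x := by
  refine (hg.mul (hf.fun_div hg hgx).exp).congr_deriv ?_
  field_simp
  ring

/-- In the self-similar Vaidya spacetime with `μ = 1/8`, the Kodama-time function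
`τ(v,r) = (v-2r) e^{2r/(v-2r)}` satisfies `r ∂_v τ + (r - v/4) ∂_r τ = 0` where
`v ≠ 2r`. -/
theorem stmt15 (τ : ℝ → ℝ → ℝ)
    (hτ : τ = fun v r => (v - 2*r) * Real.exp (2*r/(v - 2*r))) :
    ∀ v r : ℝ, v ≠ 2*r →
      r * deriv (fun v' => τ v' r) v + (r - v/4) * deriv (fun r' => τ v r') r = 0 := by
  subst hτ
  intro v r hvr
  have hw : v - 2*r ≠ 0 := sub_ne_zero.mpr hvr
  have hτv := HasDerivAt.mul_exp_div (hasDerivAt_const v (2*r))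
    ((hasDerivAt_id' v).sub_const (2*r)) hw
  have hτr := HasDerivAt.mul_exp_div ((hasDerivAt_id' r).const_mul 2)
    (((hasDerivAt_id' r).const_mul 2).const_sub v) hw
  rw [hτv.deriv, hτr.deriv]
  -- with `w = v - 2r`: `r (1 - 2r/w) + (r - v/4) (4r/w) = r (1 - w/w)`
  linear_combination (-Real.exp (2*r/(v - 2*r)) * r) * mul_inv_cancel₀ hw
end

section
/- Let $0 \leq \mu < 1/8$, set $\lambda_{\pm} = \frac{1}{2}(1 \pm \sqrt{1 - 8\mu})$, and define $\tau(v,r) = (2\mu v - \lambda_- r)^{\lambda_+/\sqrt{1-8\mu}}\,(2\mu v - \lambda_+ r)^{-\lambda_- /\sqrt{1-8\mu}}$ on the open region where $2\mu v - \lambda_- r > 0$ and $2\mu v - \lambda_+ r > 0$. Then $\tau$ satisfies $r\,\frac{\partial\tau}{\partial v} + (r - 2\mu v)\,\frac{\partial\tau}{\partial r} = 0$. -/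
/-- In the self-similar Vaidya spacetime with `0 ≤ μ < 1/8` (node case), the
Kodama-time function
`τ(v,r) = (2μv - λ₋r)^{λ₊/√(1-8μ)} (2μv - λ₊r)^{-λ₋/√(1-8μ)}`
satisfies `r ∂_v τ + (r - 2μv) ∂_r τ = 0` on the region where both bases are
positive. -/
theorem stmt16 (μ : ℝ) (h0 : 0 ≤ μ) (h1 : μ < 1/8)
    (lp lm : ℝ)
    (hlp : lp = (1 + Real.sqrt (1 - 8*μ)) / 2)
    (hlm : lm = (1 - Real.sqrt (1 - 8*μ)) / 2)
    (τ : ℝ → ℝ → ℝ)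
    (hτ : τ = fun v r =>
      (2*μ*v - lm*r) ^ (lp / Real.sqrt (1 - 8*μ)) *
      (2*μ*v - lp*r) ^ (-(lm / Real.sqrt (1 - 8*μ)))) :
    ∀ v r : ℝ, 0 < 2*μ*v - lm*r → 0 < 2*μ*v - lp*r →
      r * deriv (fun v' => τ v' r) v + (r - 2*μ*v) * deriv (fun r' => τ v r') r = 0 := by
  intro v r hA hB
  set s := Real.sqrt (1 - 8*μ) with hsdef
  have hspos : 0 < s := Real.sqrt_pos.mpr (by linarith)
  have hs2 : s ^ 2 = 1 - 8*μ := Real.sq_sqrt (by linarith)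
  set a := lp / s with ha
  set b := lm / s with hb
  set A := 2*μ*v - lm*r with hAdef
  set B := 2*μ*v - lp*r with hBdef
  -- derivative in v
  have hAv : HasDerivAt (fun v' : ℝ => 2*μ*v' - lm*r) (2*μ) v := by
    simpa using ((hasDerivAt_id v).const_mul (2*μ)).sub_const (lm*r)
  have hBv : HasDerivAt (fun v' : ℝ => 2*μ*v' - lp*r) (2*μ) v := by
    simpa using ((hasDerivAt_id v).const_mul (2*μ)).sub_const (lp*r)
  have hAr : HasDerivAt (fun r' : ℝ => 2*μ*v - lm*r') (-lm) r := by
    simpa using ((hasDerivAt_id r).const_mul lm).const_sub (2*μ*v)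
  have hBr : HasDerivAt (fun r' : ℝ => 2*μ*v - lp*r') (-lp) r := by
    simpa using ((hasDerivAt_id r).const_mul lp).const_sub (2*μ*v)
  have h1v : HasDerivAt (fun v' : ℝ => (2*μ*v' - lm*r) ^ a) ((2*μ) * a * A ^ (a-1)) v :=
    hAv.rpow_const (Or.inl hA.ne')
  have h2v : HasDerivAt (fun v' : ℝ => (2*μ*v' - lp*r) ^ (-b)) ((2*μ) * (-b) * B ^ (-b-1)) v :=
    hBv.rpow_const (Or.inl hB.ne')
  have h1r : HasDerivAt (fun r' : ℝ => (2*μ*v - lm*r') ^ a) ((-lm) * a * A ^ (a-1)) r :=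
    hAr.rpow_const (Or.inl hA.ne')
  have h2r : HasDerivAt (fun r' : ℝ => (2*μ*v - lp*r') ^ (-b)) ((-lp) * (-b) * B ^ (-b-1)) r :=
    hBr.rpow_const (Or.inl hB.ne')
  have hdv : deriv (fun v' => τ v' r) v
      = (2*μ) * a * A ^ (a-1) * B ^ (-b) + A ^ a * ((2*μ) * (-b) * B ^ (-b-1)) := by
    rw [hτ]
    exact (h1v.mul h2v).deriv
  have hdr : deriv (fun r' => τ v r') r
      = (-lm) * a * A ^ (a-1) * B ^ (-b) + A ^ a * ((-lp) * (-b) * B ^ (-b-1)) := by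
    rw [hτ]
    exact (h1r.mul h2r).deriv
  rw [hdv, hdr]
  have hApow : A ^ a = A ^ (a-1) * A := by
    rw [← Real.rpow_add_one hA.ne' (a-1)]; ring_nf
  have hBpow : B ^ (-b) = B ^ (-b-1) * B := by
    rw [← Real.rpow_add_one hB.ne' (-b-1)]; ring_nf
  rw [hApow, hBpow]
  have hsum : lp + lm = 1 := by rw [hlp, hlm]; ring
  have hprod : lp * lm = 2*μ := by
    have hss : s * s = 1 - 8*μ :=
      Real.mul_self_sqrt (by linarith)
    rw [hlp, hlm]
    nlinarith [hss]
  generalize A ^ (a-1) = X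
  generalize B ^ (-b-1) = Y
  rw [ha, hb, hAdef, hBdef]
  linear_combination (X*Y*(lp-lm)*r/s) * ((-(2*μ*r)) * hsum + (r-2*μ*v) * hprod)
end
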